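/- Let G be a simple graph such that: every edge of G lies in a 3-clique; G contains no 4-cycle (there are no four pairwise distinct vertices u₀, u₁, u₂, u₃ with u₀ adjacent to u₁, u₁ to u₂, u₂ to u₃, and u₃ to u₀); and G is 2-robustly 3-colourable. Let {i₁, i₂} and {i₁', i₂'} be two distinct edges of G, and suppose none of the following configurations occurs: (A) some vertex w is adjacent to each of i₁, i₂, i₁', i₂'; (B) there are adjacent vertices w, w' with w adjacent to both i₁ and i₂ and w' adjacent to both i₁' and i₂'; (C) some vertex among i₁', i₂' is adjacent to both i₁ and i₂, or some vertex among i₁, i₂ is adjacent to both i₁' and i₂'. Then there is a proper 3-colouring of G under which the set {i₁, i₂, i₁', i₂'} receives exactly 2 colours, and there is a proper 3-colouring of G under which the set {i₁, i₂, i₁', i₂'} receives exactly 3 colours. -/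

import Mathlib

/-!
Pick triangles `i₁ i₂ w` and `i₁' i₂' w'`. In a proper 3-colouring the edge `i₁ i₂` takes
exactly the two colours other than that of `w`, and likewise for `i₁' i₂'` and `w'`; so the four
vertices see 2 colours when `w` and `w'` share a colour and 3 otherwise. Configuration (B)
makes `w, w'` non-adjacent and configuration (A) makes them distinct, so robustness lets us
prescribe equal, respectively different, colours on them.
-/

open Finset

lemma Fin.three_pair_eq_univ_erase {a b k : Fin 3} (hab : a ≠ b) (ha : a ≠ k) (hb : b ≠ k) :
    ({a, b} : Finset (Fin 3)) = univ.erase k := by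
  revert a b k
  decide

lemma Fin.three_card_univ_erase_union_univ_erase (k k' : Fin 3) :
    (univ.erase k ∪ univ.erase k').card = if k = k' then 2 else 3 := by
  revert k k'
  decide

namespace SimpleGraph

variable {V : Type} {G : SimpleGraph V} {c : V → Fin 3}

lemma colour_pair_eq_univ_erase_of_triangle (hc : ∀ x y : V, G.Adj x y → c x ≠ c y)
    {u v w : V} (huv : G.Adj u v) (huw : G.Adj u w) (hvw : G.Adj v w) :
    ({c u, c v} : Finset (Fin 3)) = univ.erase (c w) :=
  Fin.three_pair_eq_univ_erase (hc u v huv) (hc u w huw) (hc v w hvw)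

lemma card_colours_of_two_triangles (hc : ∀ x y : V, G.Adj x y → c x ≠ c y)
    {u v w u' v' w' : V} (huv : G.Adj u v) (huw : G.Adj u w) (hvw : G.Adj v w)
    (huv' : G.Adj u' v') (huw' : G.Adj u' w') (hvw' : G.Adj v' w') :
    ({c u, c v, c u', c v'} : Finset (Fin 3)).card = if c w = c w' then 2 else 3 := by
  have hunion : ({c u, c v, c u', c v'} : Finset (Fin 3)) = {c u, c v} ∪ {c u', c v'} := by
    simp only [insert_union, singleton_union]
  rw [hunion, colour_pair_eq_univ_erase_of_triangle hc huv huw hvw,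
    colour_pair_eq_univ_erase_of_triangle hc huv' huw' hvw',
    Fin.three_card_univ_erase_union_univ_erase]

end SimpleGraph

theorem stmt_12 {V : Type} (G : SimpleGraph V)
    -- every edge lies in a 3-clique
    (htri : ∀ u v : V, G.Adj u v → ∃ w : V, G.Adj u w ∧ G.Adj v w)
    -- 2-robust 3-colourability
    (hrob : ∀ u v : V, ∀ cu cv : Fin 3, (u = v → cu = cv) → (G.Adj u v → cu ≠ cv) →
      ∃ c : V → Fin 3, (∀ x y : V, G.Adj x y → c x ≠ c y) ∧ c u = cu ∧ c v = cv)
    (i₁ i₂ i₁' i₂' : V) (he : G.Adj i₁ i₂) (he' : G.Adj i₁' i₂')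
    -- configuration (A): no common neighbour of all four vertices
    (hA : ¬ ∃ w : V, G.Adj w i₁ ∧ G.Adj w i₂ ∧ G.Adj w i₁' ∧ G.Adj w i₂')
    -- configuration (B): no adjacent pair of vertices triangulating the two edges
    (hB : ¬ ∃ w w' : V, G.Adj w w' ∧ G.Adj w i₁ ∧ G.Adj w i₂ ∧ G.Adj w' i₁' ∧ G.Adj w' i₂') :
    (∃ c : V → Fin 3, (∀ x y : V, G.Adj x y → c x ≠ c y) ∧
      ({c i₁, c i₂, c i₁', c i₂'} : Finset (Fin 3)).card = 2) ∧
    (∃ c : V → Fin 3, (∀ x y : V, G.Adj x y → c x ≠ c y) ∧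
      ({c i₁, c i₂, c i₁', c i₂'} : Finset (Fin 3)).card = 3) := by
  obtain ⟨w, hw₁, hw₂⟩ := htri i₁ i₂ he
  obtain ⟨w', hw₁', hw₂'⟩ := htri i₁' i₂' he'
  have hww'_not_adj : ¬ G.Adj w w' := fun h =>
    hB ⟨w, w', h, hw₁.symm, hw₂.symm, hw₁'.symm, hw₂'.symm⟩
  have hww'_ne : w ≠ w' := by
    rintro rfl
    exact hA ⟨w, hw₁.symm, hw₂.symm, hw₁'.symm, hw₂'.symm⟩
  constructor
  · obtain ⟨c, hc, hcw, hcw'⟩ := hrob w w' 0 0 (fun _ => rfl) (absurd · hww'_not_adj)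
    refine ⟨c, hc, ?_⟩
    rw [SimpleGraph.card_colours_of_two_triangles hc he hw₁ hw₂ he' hw₁' hw₂', hcw, hcw',
      if_pos rfl]
  · obtain ⟨c, hc, hcw, hcw'⟩ := hrob w w' 0 1 (absurd · hww'_ne) (fun _ => by decide)
    refine ⟨c, hc, ?_⟩
    rw [SimpleGraph.card_colours_of_two_triangles hc he hw₁ hw₂ he' hw₁' hw₂', hcw, hcw',
      if_neg (by decide)]
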